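/- Let G1, G2, G3 be pairwise disjoint connected simple graphs with |V(Gi)| ≥ 2 and mi = |E(Gi)| ≥ 1, with chosen vertices u1 ∈ V(G1), u2 ∈ V(G2), u3 ∈ V(G3), and let v ∈ V(G1) be a vertex at maximum distance from u1 in G1. Let G0 be obtained from G1 and G2 by identifying u1 with u2 into a vertex u. Let G be obtained from G0 and G3 by identifying u3 with u, and let G' be obtained from G0 and G3 by identifying u3 with v. If m2 ≥ m1, then W_e(G) ≤ W_e(G'). -/

import Mathlib

open SimpleGraph Finset
open scoped Classical

/-- The distance `d_G(f,g)` between two edges: `0` if they coincide, otherwise the minimum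
distance between endpoints plus one (i.e. the distance in the line graph). -/
noncomputable def eDist {V : Type*} (G : SimpleGraph V) (e f : Sym2 V) : ℕ :=
  if e = f then 0 else sInf {n : ℕ | ∃ u ∈ e, ∃ w ∈ f, G.dist u w = n} + 1

/-- The distance `d_G(v,f)` between a vertex and an edge: the minimum distance to an endpoint. -/
noncomputable def vDist {V : Type*} (G : SimpleGraph V) (v : V) (e : Sym2 V) : ℕ :=
  sInf {n : ℕ | ∃ u ∈ e, G.dist v u = n}

/-- The edge-Wiener index `W_e(G)`: the sum of `eDist` over unordered pairs of edges. -/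
noncomputable def edgeWiener {V : Type*} [Fintype V] (G : SimpleGraph V) : ℕ :=
  (∑ e ∈ G.edgeFinset, ∑ f ∈ G.edgeFinset, eDist G e f) / 2

/-- The vertex of `V1 ⊕ {y : V2 // y ≠ u2}` corresponding to `x : V2` after identifying
`u2` with `u1`. -/
noncomputable def glueVert {V1 V2 : Type*} (u1 : V1) (u2 : V2) (x : V2) :
    V1 ⊕ {y : V2 // y ≠ u2} :=
  if h : x = u2 then Sum.inl u1 else Sum.inr ⟨x, h⟩

/-- The graph obtained from disjoint graphs `G1`, `G2` by identifying `u1 ∈ V(G1)` with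
`u2 ∈ V(G2)` into a single vertex (namely `Sum.inl u1`). -/
noncomputable def joinAt {V1 V2 : Type*} (G1 : SimpleGraph V1) (G2 : SimpleGraph V2)
    (u1 : V1) (u2 : V2) : SimpleGraph (V1 ⊕ {y : V2 // y ≠ u2}) :=
  SimpleGraph.fromRel (fun a b =>
    (∃ x y, G1.Adj x y ∧ a = Sum.inl x ∧ b = Sum.inl y) ∨
    (∃ x y, G2.Adj x y ∧ a = glueVert u1 u2 x ∧ b = glueVert u1 u2 y))

/-!
Distances in a graph glued from `H` and `K` at `w ∈ V(H)`, `u ∈ V(K)` split as the sum of the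
distances of the projections onto `H` and onto `K`, each projection collapsing the other piece
onto its gluing vertex. Hence edges from the same piece keep their distance, and `e ∈ E(H)`,
`f ∈ E(K)` are at distance `d_H(w, e) + d_K(u, f) + 1`. Writing `D_G(x) = ∑_f d_G(x, f)`, this
gives `W_e(H ∘ K) = W_e(H) + W_e(K) + m_K D_H(w) + m_H D_K(u) + m_H m_K`, so with `H = G0` and
`K = G3` it suffices that `D_{G0}(u) ≤ D_{G0}(v)`. For `x ∈ V(G1)`,
`D_{G0}(x) = D_{G1}(x) + m2 d(x, u1) + D_{G2}(u2)`, and the triangle inequality gives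
`D_{G1}(u1) ≤ D_{G1}(v) + m1 d(u1, v)`, which is enough because `m1 ≤ m2`.
-/

open Function (Embedding)
open scoped Pointwise

lemma Nat.csInf_add {s t : Set ℕ} (hs : s.Nonempty) (ht : t.Nonempty) :
    sInf (s + t) = sInf s + sInf t := by
  refine le_antisymm (Nat.sInf_le (Set.add_mem_add (Nat.sInf_mem hs) (Nat.sInf_mem ht))) ?_
  obtain ⟨a, ha, b, hb, hab⟩ := Nat.sInf_mem (hs.add ht)
  rw [← hab]
  exact add_le_add (Nat.sInf_le ha) (Nat.sInf_le hb)

lemma dist_map_le {V W : Type*} {G : SimpleGraph V} {G' : SimpleGraph W} (φ : G →g G')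
    {a b : V} (h : G.Reachable a b) : G'.dist (φ a) (φ b) ≤ G.dist a b := by
  obtain ⟨p, hp⟩ := h.exists_walk_length_eq_dist
  simpa [hp] using dist_le (p.map φ)

section EdgeDist

variable {α β : Type*} {G : SimpleGraph α} {G' : SimpleGraph β}

lemma setOf_dist_mem_nonempty (G : SimpleGraph α) (v : α) (e : Sym2 α) :
    {n : ℕ | ∃ b ∈ e, G.dist v b = n}.Nonempty :=
  ⟨_, e.out.1, e.out_fst_mem, rfl⟩

lemma vDist_le_dist {v b : α} {e : Sym2 α} (hb : b ∈ e) : vDist G v e ≤ G.dist v b :=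
  Nat.sInf_le ⟨b, hb, rfl⟩

lemma vDist_le_dist_add_vDist (hG : G.Connected) (a b : α) (e : Sym2 α) :
    vDist G a e ≤ G.dist a b + vDist G b e := by
  obtain ⟨c, hc, hbc⟩ := Nat.sInf_mem (setOf_dist_mem_nonempty G b e)
  calc vDist G a e ≤ G.dist a c := vDist_le_dist hc
    _ ≤ G.dist a b + G.dist b c := hG.dist_triangle
    _ = G.dist a b + vDist G b e := by rw [hbc, vDist]

lemma vDist_map (f : α → β) (c : ℕ) {x : α} {x' : β}
    (hf : ∀ b, G'.dist x' (f b) = c + G.dist x b) (e : Sym2 α) :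
    vDist G' x' (e.map f) = c + vDist G x e := by
  have hset : {n : ℕ | ∃ b ∈ e.map f, G'.dist x' b = n}
      = ({c} : Set ℕ) + {n : ℕ | ∃ b ∈ e, G.dist x b = n} := by
    ext n
    simp [Sym2.mem_map, Set.singleton_add, hf]
  rw [vDist, hset, Nat.csInf_add (Set.singleton_nonempty c) (setOf_dist_mem_nonempty G x e),
    csInf_singleton, vDist]

lemma eDist_comm (G : SimpleGraph α) (e f : Sym2 α) : eDist G e f = eDist G f e := by
  unfold eDist
  by_cases h : e = f
  · simp [h]
  · rw [if_neg h, if_neg (Ne.symm h)]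
    congr 2
    ext n
    constructor <;> rintro ⟨a, ha, b, hb, rfl⟩ <;> exact ⟨b, hb, a, ha, dist_comm⟩

lemma eDist_map (f : α ↪ β) (hf : ∀ a b, G'.dist (f a) (f b) = G.dist a b) (e e' : Sym2 α) :
    eDist G' (e.map f) (e'.map f) = eDist G e e' := by
  have hset : {n : ℕ | ∃ a ∈ e.map f, ∃ b ∈ e'.map f, G'.dist a b = n}
      = {n : ℕ | ∃ a ∈ e, ∃ b ∈ e', G.dist a b = n} := by
    ext n
    simp [Sym2.mem_map, hf]
  simp only [eDist, (Sym2.map.injective f.injective).eq_iff, hset]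

end EdgeDist

section JoinAt

variable {VH VK : Type*} {H : SimpleGraph VH} {K : SimpleGraph VK} {w : VH} {u : VK}

lemma glueVert_self : glueVert w u u = Sum.inl w := by simp [glueVert]

lemma glueVert_of_ne {z : VK} (hz : z ≠ u) : glueVert w u z = Sum.inr ⟨z, hz⟩ := by
  simp [glueVert, hz]

lemma glueVert_injective : Function.Injective (glueVert w u) := by
  intro a b hab
  by_cases ha : a = u <;> by_cases hb : b = u <;> simp_all [glueVert]

variable (w u) in
noncomputable def glueEmb : VK ↪ VH ⊕ {y : VK // y ≠ u} :=
  ⟨glueVert w u, glueVert_injective⟩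

@[simp] lemma glueEmb_apply (z : VK) : glueEmb w u z = glueVert w u z := rfl

variable (H K) in
lemma joinAt_eq_sup :
    joinAt H K w u = H.map Embedding.inl ⊔ K.map (glueEmb w u) := by
  ext a b
  simp only [joinAt, fromRel_adj, sup_adj, map_adj, Embedding.inl_apply, glueEmb_apply]
  constructor
  · rintro ⟨-, (⟨x, y, h, rfl, rfl⟩ | ⟨x, y, h, rfl, rfl⟩) |
      (⟨x, y, h, rfl, rfl⟩ | ⟨x, y, h, rfl, rfl⟩)⟩
    exacts [.inl ⟨x, y, h, rfl, rfl⟩, .inr ⟨x, y, h, rfl, rfl⟩,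
      .inl ⟨y, x, h.symm, rfl, rfl⟩, .inr ⟨y, x, h.symm, rfl, rfl⟩]
  · rintro (⟨x, y, h, rfl, rfl⟩ | ⟨x, y, h, rfl, rfl⟩)
    · exact ⟨by simpa using h.ne, .inl (.inl ⟨x, y, h, rfl, rfl⟩)⟩
    · exact ⟨glueVert_injective.ne h.ne, .inl (.inr ⟨x, y, h, rfl, rfl⟩)⟩

variable (H K w u) in
noncomputable def inlHom : H →g joinAt H K w u where
  toFun := Sum.inl
  map_rel' h := by rw [joinAt_eq_sup]; exact .inl ((map_adj _ _ _ _).2 ⟨_, _, h, rfl, rfl⟩)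

variable (H K w u) in
noncomputable def glueHom : K →g joinAt H K w u where
  toFun := glueVert w u
  map_rel' h := by rw [joinAt_eq_sup]; exact .inr ((map_adj _ _ _ _).2 ⟨_, _, h, rfl, rfl⟩)

lemma joinAt_connected (hH : H.Connected) (hK : K.Connected) :
    (joinAt H K w u).Connected := by
  have hreach : ∀ c, (joinAt H K w u).Reachable (Sum.inl w) c := by
    rintro (x | ⟨z, hz⟩)
    · exact (hH.preconnected w x).map (inlHom H K w u)
    · simpa [glueHom, glueVert_self, glueVert_of_ne hz] using
        (hK.preconnected u z).map (glueHom H K w u)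
  exact connected_iff_exists_forall_reachable _ |>.2 ⟨_, hreach⟩

variable (w) in
def leftProj : VH ⊕ {y : VK // y ≠ u} → VH := Sum.elim id fun _ => w

variable (u) in
def rightProj : VH ⊕ {y : VK // y ≠ u} → VK := Sum.elim (fun _ => u) Subtype.val

@[simp] lemma leftProj_inl (x : VH) : leftProj (u := u) w (Sum.inl x) = x := rfl

@[simp] lemma rightProj_inl (x : VH) :
    rightProj u (Sum.inl x : VH ⊕ {y : VK // y ≠ u}) = u := rfl

@[simp] lemma leftProj_glueVert (z : VK) : leftProj w (glueVert w u z) = w := by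
  by_cases hz : z = u <;> simp [glueVert, hz, leftProj]

@[simp] lemma rightProj_glueVert (z : VK) : rightProj u (glueVert w u z) = z := by
  by_cases hz : z = u <;> simp [glueVert, hz, rightProj]

lemma dist_proj_add_dist_proj_le_length (hH : H.Connected) (hK : K.Connected)
    {a b : VH ⊕ {y : VK // y ≠ u}} (p : (joinAt H K w u).Walk a b) :
    H.dist (leftProj w a) (leftProj w b) + K.dist (rightProj u a) (rightProj u b) ≤ p.length := by
  induction p with
  | nil => simp
  | @cons a c b hac p ih =>
    have hstep : H.dist (leftProj w a) (leftProj w c) + K.dist (rightProj u a) (rightProj u c)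
        ≤ 1 := by
      rw [joinAt_eq_sup] at hac
      rcases hac with hac | hac <;> obtain ⟨x, y, hxy, rfl, rfl⟩ := (map_adj _ _ _ _).1 hac <;>
        simp [dist_eq_one_iff_adj.2 hxy]
    have := hH.dist_triangle (u := leftProj w a) (v := leftProj w c) (w := leftProj w b)
    have := hK.dist_triangle (u := rightProj u a) (v := rightProj u c) (w := rightProj u b)
    rw [Walk.length_cons]
    omega

lemma dist_proj_add_dist_proj_le (hH : H.Connected) (hK : K.Connected)
    (a b : VH ⊕ {y : VK // y ≠ u}) :
    H.dist (leftProj w a) (leftProj w b) + K.dist (rightProj u a) (rightProj u b)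
      ≤ (joinAt H K w u).dist a b := by
  obtain ⟨p, hp⟩ := (joinAt_connected hH hK).exists_walk_length_eq_dist a b
  exact hp ▸ dist_proj_add_dist_proj_le_length hH hK p

lemma joinAt_dist_inl_inl (hH : H.Connected) (hK : K.Connected) (x y : VH) :
    (joinAt H K w u).dist (Sum.inl x) (Sum.inl y) = H.dist x y := by
  refine le_antisymm (dist_map_le (inlHom H K w u) (hH.preconnected x y)) ?_
  simpa using dist_proj_add_dist_proj_le (w := w) (u := u) hH hK (.inl x) (.inl y)

lemma joinAt_dist_glueVert_glueVert (hH : H.Connected) (hK : K.Connected) (a b : VK) :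
    (joinAt H K w u).dist (glueVert w u a) (glueVert w u b) = K.dist a b := by
  refine le_antisymm (dist_map_le (glueHom H K w u) (hK.preconnected a b)) ?_
  simpa using dist_proj_add_dist_proj_le (w := w) hH hK (glueVert w u a) (glueVert w u b)

lemma joinAt_dist_inl_glueVert (hH : H.Connected) (hK : K.Connected) (x : VH) (b : VK) :
    (joinAt H K w u).dist (Sum.inl x) (glueVert w u b) = H.dist x w + K.dist u b := by
  refine le_antisymm ?_ <| by
    simpa using dist_proj_add_dist_proj_le (w := w) hH hK (.inl x) (glueVert w u b)
  calc (joinAt H K w u).dist (Sum.inl x) (glueVert w u b)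
      ≤ (joinAt H K w u).dist (Sum.inl x) (Sum.inl w)
        + (joinAt H K w u).dist (glueVert w u u) (glueVert w u b) := by
        rw [glueVert_self]; exact (joinAt_connected hH hK).dist_triangle
    _ = H.dist x w + K.dist u b := by
        rw [joinAt_dist_inl_inl hH hK, joinAt_dist_glueVert_glueVert hH hK]

lemma map_inl_ne_map_glueVert (e : Sym2 VH) {f : Sym2 VK} (hf : f ∈ K.edgeSet) :
    e.map Sum.inl ≠ f.map (glueVert w u) := by
  intro heq
  have hdiag := congrArg (Sym2.map (rightProj u)) heq
  simp only [Sym2.map_map] at hdiag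
  have hid : rightProj u ∘ glueVert w u = id := funext rightProj_glueVert
  rw [hid, Sym2.map_id, id] at hdiag
  refine K.not_isDiag_of_mem_edgeSet hf (hdiag ▸ ?_)
  induction e with
  | _ a b => simp

lemma joinAt_eDist_inl_glueVert (hH : H.Connected) (hK : K.Connected) (e : Sym2 VH)
    {f : Sym2 VK} (hf : f ∈ K.edgeSet) :
    eDist (joinAt H K w u) (e.map Sum.inl) (f.map (glueVert w u))
      = vDist H w e + vDist K u f + 1 := by
  have hset : {n : ℕ | ∃ a ∈ e.map Sum.inl, ∃ b ∈ f.map (glueVert w u),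
        (joinAt H K w u).dist a b = n}
      = {n : ℕ | ∃ a ∈ e, H.dist w a = n} + {n : ℕ | ∃ b ∈ f, K.dist u b = n} := by
    ext n
    simp [Sym2.mem_map, Set.mem_add, joinAt_dist_inl_glueVert hH hK, dist_comm]
  rw [eDist, if_neg (map_inl_ne_map_glueVert e hf), hset,
    Nat.csInf_add (setOf_dist_mem_nonempty H w e) (setOf_dist_mem_nonempty K u f), vDist, vDist]

variable [Fintype VH] [Fintype VK]

lemma disjoint_edgeFinset_map :
    Disjoint (H.edgeFinset.map (Embedding.inl (β := {y : VK // y ≠ u})).sym2Map)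
      (K.edgeFinset.map (glueEmb w u).sym2Map) := by
  simp only [Finset.disjoint_left, Finset.mem_map, mem_edgeFinset, not_exists, not_and]
  rintro _ ⟨e, -, rfl⟩ f hf heq
  exact map_inl_ne_map_glueVert e hf heq.symm

lemma joinAt_edgeFinset :
    (joinAt H K w u).edgeFinset
      = (H.edgeFinset.map Embedding.inl.sym2Map).disjUnion
          (K.edgeFinset.map (glueEmb w u).sym2Map) disjoint_edgeFinset_map := by
  ext e
  rw [mem_edgeFinset, joinAt_eq_sup, edgeSet_sup, edgeSet_map, edgeSet_map]
  simp

end JoinAt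

section Sums

variable {V : Type*} [Fintype V] {G : SimpleGraph V}

noncomputable def vDistSum (G : SimpleGraph V) (x : V) : ℕ := ∑ e ∈ G.edgeFinset, vDist G x e

noncomputable def eDistSum (G : SimpleGraph V) : ℕ :=
  ∑ e ∈ G.edgeFinset, ∑ f ∈ G.edgeFinset, eDist G e f

lemma vDistSum_le_vDistSum_add (hG : G.Connected) (a b : V) :
    vDistSum G a ≤ vDistSum G b + #G.edgeFinset * G.dist a b := by
  calc vDistSum G a ≤ ∑ e ∈ G.edgeFinset, (G.dist a b + vDist G b e) :=
        Finset.sum_le_sum fun e _ => vDist_le_dist_add_vDist hG a b e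
    _ = vDistSum G b + #G.edgeFinset * G.dist a b := by
        rw [Finset.sum_add_distrib, Finset.sum_const, smul_eq_mul, vDistSum, add_comm]

variable {VH VK : Type*} [Fintype VH] [Fintype VK]
variable {H : SimpleGraph VH} {K : SimpleGraph VK} {w : VH} {u : VK}

lemma eDistSum_joinAt (hH : H.Connected) (hK : K.Connected) :
    eDistSum (joinAt H K w u) = eDistSum H + eDistSum K
      + 2 * (#K.edgeFinset * vDistSum H w + #H.edgeFinset * vDistSum K u
        + #H.edgeFinset * #K.edgeFinset) := by
  have hcross : ∑ e ∈ H.edgeFinset, ∑ f ∈ K.edgeFinset,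
      eDist (joinAt H K w u) (e.map Embedding.inl) (f.map (glueEmb w u))
      = #K.edgeFinset * vDistSum H w + #H.edgeFinset * vDistSum K u
        + #H.edgeFinset * #K.edgeFinset := by
    calc _ = ∑ e ∈ H.edgeFinset, ∑ f ∈ K.edgeFinset, (vDist H w e + vDist K u f + 1) :=
          Finset.sum_congr rfl fun e _ => Finset.sum_congr rfl fun f hf =>
            joinAt_eDist_inl_glueVert hH hK e (mem_edgeFinset.1 hf)
      _ = _ := by
          simp only [Finset.sum_add_distrib, Finset.sum_const, smul_eq_mul, vDistSum,
            Finset.mul_sum]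
          ring
  simp only [eDistSum, joinAt_edgeFinset, Finset.sum_disjUnion, Finset.sum_map,
    Embedding.sym2Map_apply, Finset.sum_add_distrib,
    eDist_map Embedding.inl (joinAt_dist_inl_inl (w := w) (u := u) hH hK),
    eDist_map (glueEmb w u) (joinAt_dist_glueVert_glueVert hH hK)]
  rw [Finset.sum_comm (s := K.edgeFinset)]
  simp only [eDist_comm _ (Sym2.map (glueEmb w u) _), hcross]
  ring

lemma vDistSum_joinAt_inl (hH : H.Connected) (hK : K.Connected) (x : VH) :
    vDistSum (joinAt H K w u) (Sum.inl x)
      = vDistSum H x + #K.edgeFinset * H.dist x w + vDistSum K u := by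
  simp only [vDistSum, joinAt_edgeFinset, Finset.sum_disjUnion, Finset.sum_map,
    Embedding.sym2Map_apply,
    vDist_map Embedding.inl 0 fun b => (joinAt_dist_inl_inl hH hK x b).trans (zero_add _).symm,
    vDist_map (glueEmb w u) (H.dist x w) (joinAt_dist_inl_glueVert hH hK x),
    zero_add, Finset.sum_add_distrib, Finset.sum_const, smul_eq_mul]
  ring

lemma vDistSum_joinAt_inl_le (hH : H.Connected) (hK : K.Connected)
    (hm : #H.edgeFinset ≤ #K.edgeFinset) (x : VH) :
    vDistSum (joinAt H K w u) (Sum.inl w) ≤ vDistSum (joinAt H K w u) (Sum.inl x) := by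
  rw [vDistSum_joinAt_inl hH hK, vDistSum_joinAt_inl hH hK, dist_self, mul_zero, add_zero]
  gcongr
  calc vDistSum H w ≤ vDistSum H x + #H.edgeFinset * H.dist w x := vDistSum_le_vDistSum_add hH w x
    _ ≤ vDistSum H x + #K.edgeFinset * H.dist x w := by rw [dist_comm]; gcongr

end Sums

theorem stmt8_general {V1 V2 V3 : Type*} [Fintype V1] [Fintype V2] [Fintype V3]
    (G1 : SimpleGraph V1) (G2 : SimpleGraph V2) (G3 : SimpleGraph V3)
    (h1 : G1.Connected) (h2 : G2.Connected) (h3 : G3.Connected)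
    (u1 : V1) (u2 : V2) (u3 : V3) (v : V1)
    (hm : G1.edgeFinset.card ≤ G2.edgeFinset.card) :
    edgeWiener (joinAt (joinAt G1 G2 u1 u2) G3 (Sum.inl u1) u3)
      ≤ edgeWiener (joinAt (joinAt G1 G2 u1 u2) G3 (Sum.inl v) u3) := by
  have h0 : (joinAt G1 G2 u1 u2).Connected := joinAt_connected h1 h2
  change eDistSum _ / 2 ≤ eDistSum _ / 2
  rw [eDistSum_joinAt h0 h3, eDistSum_joinAt h0 h3]
  gcongr
  exact vDistSum_joinAt_inl_le h1 h2 hm v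

theorem stmt8 {V1 V2 V3 : Type*} [Fintype V1] [Fintype V2] [Fintype V3]
    (G1 : SimpleGraph V1) (G2 : SimpleGraph V2) (G3 : SimpleGraph V3)
    (h1 : G1.Connected) (h2 : G2.Connected) (h3 : G3.Connected)
    (hn1 : 2 ≤ Fintype.card V1) (hn2 : 2 ≤ Fintype.card V2) (hn3 : 2 ≤ Fintype.card V3)
    (hm1 : 1 ≤ G1.edgeFinset.card) (hm2 : 1 ≤ G2.edgeFinset.card)
    (hm3 : 1 ≤ G3.edgeFinset.card)
    (u1 : V1) (u2 : V2) (u3 : V3) (v : V1)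
    (hfar : ∀ w : V1, G1.dist u1 w ≤ G1.dist u1 v)
    (hm : G1.edgeFinset.card ≤ G2.edgeFinset.card) :
    edgeWiener (joinAt (joinAt G1 G2 u1 u2) G3 (Sum.inl u1) u3)
      ≤ edgeWiener (joinAt (joinAt G1 G2 u1 u2) G3 (Sum.inl v) u3) :=
  stmt8_general G1 G2 G3 h1 h2 h3 u1 u2 u3 v hm
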